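/- arXiv:1005.0042 — 2 statements merged into one kernel-verified Lean document; each statement's English description precedes it below -/
import Mathlib

section
/- Let G be a subgroup of GL_n(K) that is conjugate to a subgroup of the group of upper triangular unipotent matrices (special triangular group). Then the Zariski closure of G in GL_n(K) is a unipotent algebraic group, i.e. it is conjugate to a subgroup of the group of upper triangular unipotent matrices. -/
open scoped MatrixGroups

noncomputable def entries {n : ℕ} {K : Type*} [Field K] (g : GL (Fin n) K) :
    Fin n × Fin n → K := fun p => (g : Matrix (Fin n) (Fin n) K) p.1 p.2

def IsZClosed {n : ℕ} {K : Type*} [Field K] (S : Set (GL (Fin n) K)) : Prop :=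
  ∃ I : Set (MvPolynomial (Fin n × Fin n) K),
    S = {g : GL (Fin n) K | ∀ p ∈ I, MvPolynomial.eval (entries g) p = 0}

def zClosure {n : ℕ} {K : Type*} [Field K] (S : Set (GL (Fin n) K)) :
    Set (GL (Fin n) K) :=
  {g : GL (Fin n) K | ∀ p : MvPolynomial (Fin n × Fin n) K,
    (∀ s ∈ S, MvPolynomial.eval (entries s) p = 0) →
      MvPolynomial.eval (entries g) p = 0}

def IsZConnected {n : ℕ} {K : Type*} [Field K] (S : Set (GL (Fin n) K)) : Prop :=
  ∀ U V : Set (GL (Fin n) K), IsZClosed U → IsZClosed V → S ⊆ U ∪ V →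
    (S ∩ U).Nonempty → (S ∩ V).Nonempty → (S ∩ (U ∩ V)).Nonempty

def IsUnipotentElt {n : ℕ} {K : Type*} [Field K] (g : GL (Fin n) K) : Prop :=
  ((g : Matrix (Fin n) (Fin n) K) - 1) ^ n = 0

def NormalIn {G : Type*} [Group G] (N H : Subgroup G) : Prop :=
  N ≤ H ∧ ∀ h ∈ H, ∀ x ∈ N, h * x * h⁻¹ ∈ N

def IsReductiveSub {n : ℕ} {K : Type*} [Field K] (H : Subgroup (GL (Fin n) K)) : Prop :=
  ∀ N : Subgroup (GL (Fin n) K), NormalIn N H →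
    IsZClosed (N : Set (GL (Fin n) K)) → (∀ g ∈ N, IsUnipotentElt g) → N = ⊥

/-- Membership in the special triangular group `ST_n`: upper triangular with
all diagonal entries equal to `1`. -/
def InST {n : ℕ} {K : Type*} [Field K] (g : GL (Fin n) K) : Prop :=
  (∀ i j : Fin n, j < i → (g : Matrix (Fin n) (Fin n) K) i j = 0) ∧
    ∀ i : Fin n, (g : Matrix (Fin n) (Fin n) K) i i = 1

noncomputable def conjPoly {n : ℕ} {K : Type*} [Field K] (c : GL (Fin n) K)
    (i j : Fin n) : MvPolynomial (Fin n × Fin n) K :=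
  ∑ k : Fin n, ∑ l : Fin n,
    MvPolynomial.C ((c : Matrix (Fin n) (Fin n) K) i k *
      ((c⁻¹ : GL (Fin n) K) : Matrix (Fin n) (Fin n) K) l j) * MvPolynomial.X (k, l)

lemma eval_conjPoly {n : ℕ} {K : Type*} [Field K] (c g : GL (Fin n) K) (i j : Fin n) :
    MvPolynomial.eval (entries g) (conjPoly c i j) =
      ((c * g * c⁻¹ : GL (Fin n) K) : Matrix (Fin n) (Fin n) K) i j := by
  have : ((c * g * c⁻¹ : GL (Fin n) K) : Matrix (Fin n) (Fin n) K) =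
      (c : Matrix (Fin n) (Fin n) K) * (g : Matrix (Fin n) (Fin n) K) *
        ((c⁻¹ : GL (Fin n) K) : Matrix (Fin n) (Fin n) K) := rfl
  rw [this, Matrix.mul_apply]
  simp only [conjPoly, map_sum, Matrix.mul_apply, Finset.sum_mul]
  rw [Finset.sum_comm]
  refine Finset.sum_congr rfl fun l _ => Finset.sum_congr rfl fun k _ => ?_
  simp [entries]
  ring

/-- the Zariski closure of a subgroup of `GL_n(K)` conjugate to a
subgroup of `ST_n` is again conjugate to a subgroup of `ST_n`, i.e. it is a
unipotent algebraic group. -/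
theorem zClosure_of_unipotent_is_unipotent
    {n : ℕ} {K : Type*} [Field K] [IsAlgClosed K] [CharZero K]
    (G : Subgroup (GL (Fin n) K))
    (hG : ∃ c : GL (Fin n) K, ∀ x ∈ G, InST (c * x * c⁻¹)) :
    ∃ c : GL (Fin n) K, ∀ x ∈ zClosure (G : Set (GL (Fin n) K)), InST (c * x * c⁻¹) := by
  obtain ⟨c, hc⟩ := hG
  refine ⟨c, fun x hx => ?_⟩
  constructor
  · intro i j hij
    rw [← eval_conjPoly]
    exact hx _ (fun s hs => by rw [eval_conjPoly]; exact (hc s hs).1 i j hij)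
  · intro i
    have := hx (conjPoly c i i - MvPolynomial.C 1) (fun s hs => by
      simp [eval_conjPoly, (hc s hs).2 i])
    rw [map_sub, eval_conjPoly] at this
    simpa [sub_eq_zero] using this
end

section
/- Let G be a connected linear algebraic group over an algebraically closed field of characteristic zero that is not simple, so G contains a connected normal algebraic subgroup K of positive dimension. Let T ≅ G_m be a one-dimensional torus contained in K, let X be a nontrivial representation of G/K (on which T acts trivially), and let Y be a finite-dimensional G-module on which K (hence T) acts faithfully, with highest T-weight d > 0. Then Y ⊗ Y is not a subquotient of any G-submodule of T(X) ⊗ Y. (Weight argument: the highest T-weight occurring in T(X) ⊗ Y is d, while the highest T-weight in Y ⊗ Y is 2d.) -/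
/-! The torus element `t 2` acts on `T(X) ⊗ Y` through its action on `Y` alone, so it is
annihilated by `∏_{|j| ≤ d} (X - 2 ^ j)`, and polynomial identities of this kind pass to every
equivariant subquotient. On `Y ⊗ Y`, however, `y ⊗ y` for a weight vector `y` of weight `±d` is an
eigenvector with eigenvalue `2 ^ (±2d)`, which is not a root because `2` has infinite order in
characteristic zero. -/

open scoped TensorProduct DirectSum

/-- The induced endomorphism `f^{⊗p}` of the `p`-th tensor power. -/
noncomputable def tpowMap {K M : Type*} [CommSemiring K] [AddCommMonoid M] [Module K M]
    (f : M →ₗ[K] M) (p : ℕ) : (⨂[K]^p M) →ₗ[K] ⨂[K]^p M :=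
  PiTensorProduct.map (fun _ => f)

/-- The truncated tensor algebra `⊕_{p < N} M^{⊗p}`. -/
noncomputable abbrev TruncTensorAlg (K M : Type*) [CommSemiring K] [AddCommMonoid M]
    [Module K M] (N : ℕ) : Type _ :=
  ⨁ p : Fin N, ⨂[K]^(p : ℕ) M

/-- The endomorphism `⊕_p f^{⊗p}` of the truncated tensor algebra. -/
noncomputable def truncTensorAlgMap {K M : Type*} [CommSemiring K] [AddCommMonoid M]
    [Module K M] (f : M →ₗ[K] M) (N : ℕ) :
    TruncTensorAlg K M N →ₗ[K] TruncTensorAlg K M N :=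
  DirectSum.toModule K (Fin N) _
    (fun p => (DirectSum.lof K (Fin N) (fun q : Fin N => ⨂[K]^(q : ℕ) M) p).comp
      (tpowMap f (p : ℕ)))

/-- `Z` is an equivariant subquotient of `M`. -/
def IsSubquotientRep {K G M Z : Type*} [Field K] [AddCommGroup M] [Module K M]
    [AddCommGroup Z] [Module K Z]
    (actM : G → M →ₗ[K] M) (actZ : G → Z →ₗ[K] Z) : Prop :=
  ∃ U S : Submodule K M, S ≤ U ∧
    (∀ g : G, ∀ x ∈ U, actM g x ∈ U) ∧ (∀ g : G, ∀ x ∈ S, actM g x ∈ S) ∧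
    ∃ φ : U →ₗ[K] Z, Function.Surjective φ ∧
      (∀ x : U, φ x = 0 ↔ (x : M) ∈ S) ∧
      ∀ g : G, ∀ x y : U, actM g (x : M) = (y : M) → φ y = actZ g (φ x)

open Polynomial

theorem LinearMap.comp_aeval_of_comp_eq {R M N : Type*} [CommSemiring R] [AddCommMonoid M]
    [Module R M] [AddCommMonoid N] [Module R N] {A : Module.End R M} {B : Module.End R N}
    {φ : M →ₗ[R] N} (h : φ ∘ₗ A = B ∘ₗ φ) (p : R[X]) :
    φ ∘ₗ aeval A p = aeval B p ∘ₗ φ := by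
  induction p using Polynomial.induction_on' with
  | add p q hp hq => simp only [map_add, LinearMap.comp_add, LinearMap.add_comp, hp, hq]
  | monomial n a =>
    simp only [aeval_monomial, Module.algebraMap_end_eq_smul_id, Module.End.mul_eq_comp,
      LinearMap.comp_smul, LinearMap.smul_comp, LinearMap.id_comp,
      Module.End.commute_pow_left_of_commute h.symm]

theorem IsSubquotientRep.aeval_eq_zero {K G M Z : Type*} [Field K] [AddCommGroup M] [Module K M]
    [AddCommGroup Z] [Module K Z] {actM : G → M →ₗ[K] M} {actZ : G → Z →ₗ[K] Z}
    (h : IsSubquotientRep actM actZ) (g : G) {p : K[X]} (hp : aeval (actM g) p = 0) :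
    aeval (actZ g) p = 0 := by
  obtain ⟨U, -, -, hU, -, φ, hφ, -, hequiv⟩ := h
  set A := (actM g).restrict (hU g)
  have hUA : aeval A p = 0 := by
    refine LinearMap.ext fun x => Subtype.ext ?_
    simpa [hp] using
      LinearMap.congr_fun (U.subtype.comp_aeval_of_comp_eq (A := A) (B := actM g) rfl p) x
  have hφA := φ.comp_aeval_of_comp_eq (A := A) (B := actZ g)
    (LinearMap.ext fun x => hequiv g x (A x) rfl) p
  rw [hUA, LinearMap.comp_zero] at hφA
  exact (LinearMap.cancel_right hφ).mp (by rw [← hφA, LinearMap.zero_comp])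

theorem Module.End.aeval_eq_zero_of_iSup_eq_top {R M ι : Type*} [CommRing R] [AddCommGroup M]
    [Module R M] {V : ι → Submodule R M} (hV : ⨆ i, V i = ⊤) {f : Module.End R M} {μ : ι → R}
    (hf : ∀ i, ∀ x ∈ V i, f x = μ i • x) {p : R[X]} (hp : ∀ i, V i ≠ ⊥ → p.eval (μ i) = 0) :
    aeval f p = 0 := by
  refine LinearMap.ker_eq_top.mp (top_unique (hV ▸ iSup_le fun i => ?_))
  rcases eq_or_ne (V i) ⊥ with hi | hi
  · exact hi ▸ bot_le
  · intro x hx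
    rw [LinearMap.mem_ker, aeval_apply_of_mem_apply_eq_smul (hf i x hx), hp i hi, zero_smul]

theorem truncTensorAlgMap_id {K M : Type*} [CommSemiring K] [AddCommMonoid M] [Module K M]
    (N : ℕ) : truncTensorAlgMap (LinearMap.id : M →ₗ[K] M) N = LinearMap.id := by
  refine DirectSum.linearMap_ext _ fun i => ?_
  ext x
  simp [truncTensorAlgMap, tpowMap, PiTensorProduct.map_id, DirectSum.toModule_lof]

theorem LinearMap.aeval_lTensor {R M N : Type*} [CommSemiring R] [AddCommMonoid M] [Module R M]
    [AddCommMonoid N] [Module R N] (f : Module.End R M) (p : R[X]) :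
    aeval (f.lTensor N) p = (aeval f p).lTensor N :=
  aeval_algHom_apply (Module.End.lTensorAlgHom R M N) f p

theorem TensorProduct.tmul_ne_zero {K V W : Type*} [Field K] [AddCommGroup V] [Module K V]
    [AddCommGroup W] [Module K W] {v : V} {w : W} (hv : v ≠ 0) (hw : w ≠ 0) :
    v ⊗ₜ[K] w ≠ 0 := by
  obtain ⟨f, hf⟩ := not_forall.mp ((Module.forall_dual_apply_eq_zero_iff K v).not.mpr hv)
  obtain ⟨g, hg⟩ := not_forall.mp ((Module.forall_dual_apply_eq_zero_iff K w).not.mpr hw)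
  intro h
  have := congrArg (LinearMap.mul' K K ∘ₗ TensorProduct.map f g) h
  simp only [LinearMap.comp_apply, TensorProduct.map_tmul, LinearMap.mul'_apply, map_zero] at this
  exact mul_ne_zero hf hg this

theorem two_zpow_injective (K : Type*) [Field K] [CharZero K] :
    Function.Injective fun n : ℤ => (2 : K) ^ n := by
  intro a b h
  have h' : (((2 : ℚ) ^ a : ℚ) : K) = (((2 : ℚ) ^ b : ℚ) : K) := by
    simpa only [Rat.cast_zpow, Rat.cast_ofNat] using h
  exact zpow_right_injective₀ (by norm_num) (by norm_num) (Rat.cast_injective h')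

noncomputable def weightPoly {K : Type*} [Field K] (s : K) (d : ℕ) : K[X] :=
  ∏ j ∈ Finset.Icc (-(d : ℤ)) d, (X - C (s ^ j))

theorem eval_zpow_weightPoly_eq_zero_iff {K : Type*} [Field K] {s : K}
    (hs : Function.Injective fun n : ℤ => s ^ n) (d : ℕ) (m : ℤ) :
    (weightPoly s d).eval (s ^ m) = 0 ↔ |m| ≤ d := by
  simp only [weightPoly, eval_prod, eval_sub, eval_X, eval_C, Finset.prod_eq_zero_iff,
    sub_eq_zero, Finset.mem_Icc, abs_le]
  constructor
  · rintro ⟨j, hj, hmj⟩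
    exact hs hmj ▸ hj
  · exact fun hm => ⟨m, hm, rfl⟩

theorem tensor_square_not_subquotient_of_tensor_algebra_tensor_general
    {k : Type*} [Field k] [CharZero k]
    {G : Type*} [Group G] (K' : Subgroup G)
    (t : kˣ →* G) (htK' : ∀ s : kˣ, t s ∈ K')
    {X Y : Type*} [AddCommGroup X] [Module k X]
    [AddCommGroup Y] [Module k Y]
    (ρX : G →* (X →ₗ[k] X)ˣ) (ρY : G →* (Y →ₗ[k] Y)ˣ)
    (hXtrivial : ∀ x ∈ K', ρX x = 1)
    (Yw : ℤ → Submodule k Y) (hYint : DirectSum.IsInternal Yw)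
    (hwt : ∀ j : ℤ, ∀ y ∈ Yw j, ∀ s : kˣ,
      (ρY (t s) : Y →ₗ[k] Y) y = ((s ^ j : kˣ) : k) • y)
    (d : ℕ) (hd : 0 < d)
    (hbound : ∀ j : ℤ, (d : ℤ) < |j| → Yw j = ⊥)
    (htop : Yw (d : ℤ) ≠ ⊥ ∨ Yw (-(d : ℤ)) ≠ ⊥) :
    ∀ N : ℕ,
      ¬ IsSubquotientRep
          (M := (TruncTensorAlg k X N) ⊗[k] Y) (Z := Y ⊗[k] Y)
          (fun g : G =>
            TensorProduct.map (truncTensorAlgMap (ρX g : X →ₗ[k] X) N)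
              (ρY g : Y →ₗ[k] Y))
          (fun g : G =>
            TensorProduct.map (ρY g : Y →ₗ[k] Y) (ρY g : Y →ₗ[k] Y)) := by
  intro N hsub
  set s : kˣ := Units.mk0 2 two_ne_zero
  have hs : ∀ j : ℤ, ((s ^ j : kˣ) : k) = 2 ^ j := fun j => by simp [s]
  set ρ : Module.End k Y := (ρY (t s) : Y →ₗ[k] Y)
  set P := weightPoly (2 : k) d
  have hPY : aeval ρ P = 0 :=
    Module.End.aeval_eq_zero_of_iSup_eq_top hYint.submodule_iSup_eq_top
      (fun j y hy => (hwt j y hy s).trans (by rw [hs])) fun j hj =>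
        (eval_zpow_weightPoly_eq_zero_iff (two_zpow_injective k) d j).mpr
          (not_lt.mp (mt (hbound j) hj))
  have hPM : aeval (TensorProduct.map (truncTensorAlgMap (ρX (t s) : X →ₗ[k] X) N) ρ) P = 0 := by
    rw [hXtrivial _ (htK' s), Units.val_one, Module.End.one_eq_id, truncTensorAlgMap_id]
    exact (LinearMap.aeval_lTensor ρ P).trans (by rw [hPY, LinearMap.lTensor_zero])
  have hPZ := hsub.aeval_eq_zero (t s) hPM
  obtain ⟨e, he, hYe⟩ : ∃ e : ℤ, |e| = d ∧ Yw e ≠ ⊥ := by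
    rcases htop with h | h
    exacts [⟨d, abs_of_nonneg (by omega), h⟩, ⟨-d, by simp, h⟩]
  obtain ⟨y, hy, hy0⟩ := (Submodule.ne_bot_iff _).mp hYe
  have hyy : TensorProduct.map ρ ρ (y ⊗ₜ y) = (2 : k) ^ (e + e) • (y ⊗ₜ[k] y) := by
    rw [TensorProduct.map_tmul, hwt e y hy s, hs, TensorProduct.smul_tmul_smul,
      zpow_add₀ two_ne_zero]
  have hroot : P.eval ((2 : k) ^ (e + e)) = 0 := by
    have := Module.End.aeval_apply_of_mem_apply_eq_smul (p := P) hyy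
    rw [hPZ, LinearMap.zero_apply, eq_comm, smul_eq_zero] at this
    exact this.resolve_right (TensorProduct.tmul_ne_zero hy0 hy0)
  have hle := (eval_zpow_weightPoly_eq_zero_iff (two_zpow_injective k) d _).mp hroot
  rw [← two_mul, abs_mul, he, abs_two] at hle
  omega

/-- weight argument.  Let `G` be a (non-simple) group with a
nontrivial normal subgroup `K'`, `t : G_m → K'` a one-dimensional torus, `X` a
representation of `G` on which `K'` acts trivially and `Y` a finite-dimensional
`G`-module on which `K'` acts faithfully, with `T`-weight decomposition
`Y = ⊕ Y_j` of highest weight `d > 0`.  Then `Y ⊗ Y` is not a subquotient of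
(any `G`-submodule of) `T(X) ⊗ Y`. -/
theorem tensor_square_not_subquotient_of_tensor_algebra_tensor
    {k : Type*} [Field k] [IsAlgClosed k] [CharZero k]
    {G : Type*} [Group G] (K' : Subgroup G) [K'.Normal] (hK' : K' ≠ ⊥)
    (t : kˣ →* G) (htinj : Function.Injective t) (htK' : ∀ s : kˣ, t s ∈ K')
    {X Y : Type*} [AddCommGroup X] [Module k X] [FiniteDimensional k X]
    [AddCommGroup Y] [Module k Y] [FiniteDimensional k Y]
    (ρX : G →* (X →ₗ[k] X)ˣ) (ρY : G →* (Y →ₗ[k] Y)ˣ)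
    (hXtrivial : ∀ x ∈ K', ρX x = 1)
    (hYfaithful : ∀ x ∈ K', ρY x = 1 → x = 1)
    (Yw : ℤ → Submodule k Y) (hYint : DirectSum.IsInternal Yw)
    (hwt : ∀ j : ℤ, ∀ y ∈ Yw j, ∀ s : kˣ,
      (ρY (t s) : Y →ₗ[k] Y) y = ((s ^ j : kˣ) : k) • y)
    (d : ℕ) (hd : 0 < d)
    (hbound : ∀ j : ℤ, (d : ℤ) < |j| → Yw j = ⊥)
    (htop : Yw (d : ℤ) ≠ ⊥ ∨ Yw (-(d : ℤ)) ≠ ⊥) :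
    ∀ N : ℕ,
      ¬ IsSubquotientRep
          (M := (TruncTensorAlg k X N) ⊗[k] Y) (Z := Y ⊗[k] Y)
          (fun g : G =>
            TensorProduct.map (truncTensorAlgMap (ρX g : X →ₗ[k] X) N)
              (ρY g : Y →ₗ[k] Y))
          (fun g : G =>
            TensorProduct.map (ρY g : Y →ₗ[k] Y) (ρY g : Y →ₗ[k] Y)) :=
  tensor_square_not_subquotient_of_tensor_algebra_tensor_general K' t htK' ρX ρY hXtrivial Yw hYint
    hwt d hd hbound htop
end
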